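/- Let p be an odd prime. Then the minimal faithful permutation degree of G(p,p,p) equals p², and likewise μ(A(p,p,p) ⋊ ⟨b⟩) = p² for b the p-cycle (1 2 ... p). -/

import Mathlib

open Equiv Multiplicative Polynomial

/-- Minimal faithful permutation degree. -/
noncomputable def minDeg (G : Type*) [Group G] : ℕ :=
  sInf {n | ∃ f : G →* Equiv.Perm (Fin n), Function.Injective f}

/-- Coordinate-permutation automorphism of the base group. -/
def permAut (p q : ℕ) (σ : Equiv.Perm (Fin q)) :
    MulAut (Fin q → Multiplicative (ZMod p)) where
  toFun v := v ∘ σ.symm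
  invFun v := v ∘ σ
  left_inv v := by funext i; simp
  right_inv v := by funext i; simp
  map_mul' v w := rfl

/-- The action of `Sym(q)` on the base group of the wreath product. -/
def wreathAct (p q : ℕ) :
    Equiv.Perm (Fin q) →* MulAut (Fin q → Multiplicative (ZMod p)) where
  toFun := permAut p q
  map_one' := rfl
  map_mul' σ τ := rfl

/-- The wreath product `C_p ≀ Sym(q)`. -/
abbrev Wreath (p q : ℕ) :=
  (Fin q → Multiplicative (ZMod p)) ⋊[wreathAct p q] Equiv.Perm (Fin q)

/-- The complex reflection group `G(p,p,q)` as a subgroup of `C_p ≀ Sym(q)`. -/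
def Gppq (p q : ℕ) : Subgroup (Wreath p q) where
  carrier := {g | ∑ i, Multiplicative.toAdd (g.left i) = 0}
  one_mem' := by simp
  mul_mem' := by
    intro a b ha hb
    simp only [Set.mem_setOf_eq, SemidirectProduct.mul_left] at *
    have : ∑ i, toAdd ((wreathAct p q a.right b.left) i) = 0 := by
      have := Equiv.sum_comp a.right.symm (fun i => toAdd (b.left i))
      exact this.trans hb
    simp [Pi.mul_apply, toAdd_mul, Finset.sum_add_distrib, ha, this]
  inv_mem' := by
    intro a ha
    simp only [Set.mem_setOf_eq, SemidirectProduct.inv_left] at *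
    have h := Equiv.sum_comp a.right (fun i => toAdd (a.left⁻¹ i))
    have h2 : ∑ i, toAdd (a.left⁻¹ i) = 0 := by
      simp [toAdd_inv, Finset.sum_neg_distrib, ha]
    simp only [wreathAct, permAut, map_inv]
    exact h.trans h2


/-- The subgroup `H = A ⋊ ⟨b⟩` of the wreath product, where `b` is the cyclic
shift `(1 2 … q)`. -/
def Hgrp (p q : ℕ) : Subgroup (Wreath p q) where
  carrier := {g | ∑ i, Multiplicative.toAdd (g.left i) = 0 ∧
    g.right ∈ Subgroup.zpowers (finRotate q)}
  one_mem' := ⟨(Gppq p q).one_mem, Subgroup.one_mem _⟩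
  mul_mem' := by
    intro a b ha hb
    exact ⟨(Gppq p q).mul_mem ha.1 hb.1, by
      simpa using Subgroup.mul_mem _ ha.2 hb.2⟩
  inv_mem' := by
    intro a ha
    exact ⟨(Gppq p q).inv_mem ha.1, by simpa using Subgroup.inv_mem _ ha.2⟩

/-!
For the upper bound, `C_p ≀ Sym(p)` acts faithfully on `p` copies of `ZMod p`, each by
translation. For the lower bound it suffices to treat `H = A(p,p,p) ⋊ ⟨b⟩`, a nonabelian
`p`-group when `p` is odd. Acting on fewer than `p²` points, its orbits have length `1` or `p`;
a subgroup of index `p` of a `p`-group is normal with cyclic quotient, so every point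
stabiliser contains the commutator subgroup, and a faithful action would make `H` abelian.
-/

open Function MulAction

section MinDeg

variable {G H : Type*} [Group G] [Group H]

theorem minDeg_le {n : ℕ} (f : G →* Perm (Fin n)) (hf : Injective f) : minDeg G ≤ n :=
  Nat.sInf_le ⟨f, hf⟩

theorem le_minDeg {m : ℕ} (hG : ∃ n, ∃ f : G →* Perm (Fin n), Injective f)
    (h : ∀ n (f : G →* Perm (Fin n)), Injective f → m ≤ n) : m ≤ minDeg G :=
  le_csInf hG fun n ⟨f, hf⟩ => h n f hf

theorem minDeg_le_minDeg_of_injective (φ : H →* G) (hφ : Injective φ)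
    (hG : ∃ n, ∃ f : G →* Perm (Fin n), Injective f) : minDeg H ≤ minDeg G := by
  obtain ⟨f, hf⟩ := Nat.sInf_mem hG
  exact minDeg_le (f.comp φ) (hf.comp hφ)

end MinDeg

namespace IsPGroup

variable {p : ℕ} [hp : Fact p.Prime] {G : Type*} [Group G] [Finite G]

theorem commutator_le_of_index_eq (hG : IsPGroup p G) {H : Subgroup G} (hH : H.index = p) :
    commutator G ≤ H := by
  obtain ⟨n, hn⟩ := IsPGroup.iff_card.mp hG
  have hn0 : n ≠ 0 := by
    rintro rfl
    have := hH ▸ H.index_dvd_card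
    rw [hn, pow_zero, Nat.dvd_one] at this
    exact hp.out.ne_one this
  have : H.Normal := Subgroup.normal_of_index_eq_minFac_card <| by
    rw [hH, hn, Nat.pow_minFac hn0, hp.out.minFac_eq]
  have : IsCyclic (G ⧸ H) := isCyclic_of_prime_card (H.index_eq_card ▸ hH)
  exact Subgroup.Normal.quotient_commutative_iff_commutator_le.mp inferInstance

theorem commutator_le_stabilizer (hG : IsPGroup p G) {α : Type*} [MulAction G α] [Finite α]
    (hα : Nat.card α < p ^ 2) (a : α) : commutator G ≤ stabilizer G a := by
  obtain ⟨k, hk⟩ := hG.index (stabilizer G a)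
  have hk2 : p ^ k < p ^ 2 :=
    hk ▸ (index_stabilizer G a ▸ (orbit G a).ncard_le_card).trans_lt hα
  rw [Nat.pow_lt_pow_iff_right hp.out.one_lt] at hk2
  interval_cases k
  · rw [pow_zero, Subgroup.index_eq_one] at hk
    exact hk ▸ le_top
  · exact hG.commutator_le_of_index_eq (hk.trans (pow_one p))

theorem mul_comm_of_injective_of_card_lt_sq (hG : IsPGroup p G) {α : Type*} [Finite α]
    (f : G →* Perm α) (hf : Injective f) (hα : Nat.card α < p ^ 2) (a b : G) :
    a * b = b * a := by
  let := MulAction.compHom α f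
  rw [← commutatorElement_eq_one_iff_mul_comm]
  refine hf (Equiv.ext fun x => ?_)
  rw [map_one]
  exact hG.commutator_le_stabilizer hα x
    (Subgroup.commutator_mem_commutator (Subgroup.mem_top a) (Subgroup.mem_top b))

theorem sq_le_card_of_injective (hG : IsPGroup p G) (hnc : ∃ a b : G, a * b ≠ b * a)
    {α : Type*} [Finite α] (f : G →* Perm α) (hf : Injective f) : p ^ 2 ≤ Nat.card α := by
  obtain ⟨a, b, hab⟩ := hnc
  by_contra! hα
  exact hab (hG.mul_comm_of_injective_of_card_lt_sq f hf hα a b)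

end IsPGroup

theorem finRotate_pow_self (n : ℕ) : finRotate n ^ n = 1 := by
  rcases lt_or_ge n 2 with h | h
  · interval_cases n <;> exact Subsingleton.elim _ _
  · rw [← orderOf_dvd_iff_pow_eq_one, ← Perm.lcm_cycleType, cycleType_finRotate_of_le h]
    simp

@[simp]
theorem wreathAct_apply {p q : ℕ} (σ : Perm (Fin q)) (v : Fin q → Multiplicative (ZMod p)) :
    wreathAct p q σ v = v ∘ σ.symm :=
  rfl

namespace Wreath

variable {p q : ℕ}

instance [NeZero p] : Finite (Wreath p q) :=
  Finite.of_equiv _ SemidirectProduct.equivProd.symm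

def toPerm : Wreath p q →* Perm (Fin q × ZMod p) where
  toFun g := Equiv.prodShear g.right fun i => Equiv.addLeft (toAdd (g.left (g.right i)))
  map_one' := by ext <;> simp
  map_mul' a b := by ext <;> simp

theorem toPerm_injective : Injective (toPerm (p := p) (q := q)) := by
  rw [injective_iff_map_eq_one]
  intro g hg
  have h : ∀ x, toPerm g x = x := fun x => by rw [hg]; rfl
  have hright : g.right = 1 := Equiv.ext fun i => congrArg Prod.fst (h (i, 0))
  have hleft : g.left = 1 := funext fun i => by
    simpa [toPerm, hright] using congrArg Prod.snd (h (i, 0))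
  exact SemidirectProduct.ext hleft hright

theorem exists_injective_perm [NeZero p] (T : Subgroup (Wreath p q)) :
    ∃ f : T →* Perm (Fin (q * p)), Injective f := by
  let e : Fin q × ZMod p ≃ Fin (q * p) := Fintype.equivFinOfCardEq (by simp)
  exact ⟨(e.permCongrHom.toMonoidHom.comp toPerm).comp T.subtype,
    (e.permCongrHom.injective.comp toPerm_injective).comp T.subtype_injective⟩

theorem pow_eq_one_of_right_eq_one {g : Wreath p q} (hg : g.right = 1) : g ^ p = 1 := by
  have hleft : g.left ^ p = 1 := funext fun i => by
    change ofAdd (p • toAdd (g.left i)) = 1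
    rw [nsmul_eq_mul, ZMod.natCast_self, zero_mul]
    rfl
  rw [← SemidirectProduct.inl_left_mul_inr_right g, hg, map_one, mul_one, ← map_pow, hleft,
    map_one]

end Wreath

theorem Hgrp_le_Gppq (p q : ℕ) : Hgrp p q ≤ Gppq p q := fun _ hg => hg.1

theorem isPGroup_Hgrp (p : ℕ) : IsPGroup p (Hgrp p p) := by
  intro g
  have hright : (g : Wreath p p).right ^ p = 1 :=
    orderOf_dvd_iff_pow_eq_one.mp <| (orderOf_dvd_of_mem_zpowers g.2.2).trans <|
      orderOf_dvd_iff_pow_eq_one.mpr (finRotate_pow_self p)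
  refine ⟨2, Subtype.ext ?_⟩
  rw [Subgroup.coe_pow, pow_two, pow_mul]
  refine Wreath.pow_eq_one_of_right_eq_one ?_
  change SemidirectProduct.rightHom ((g : Wreath p p) ^ p) = 1
  rw [map_pow]
  exact hright

theorem exists_mul_ne_mul_Hgrp {p q : ℕ} (hp : 2 < p) (hq : 2 ≤ q) :
    ∃ a b : Hgrp p q, a * b ≠ b * a := by
  obtain ⟨m, rfl⟩ : ∃ m, q = m + 2 := ⟨q - 2, by omega⟩
  have : Fact (2 < p) := ⟨hp⟩
  let u : Fin (m + 2) → ZMod p := Pi.single 0 1 - Pi.single 1 1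
  have hu : ∑ i, u i = 0 := by simp [u, Finset.sum_sub_distrib]
  refine ⟨⟨⟨1, finRotate _⟩, by simp, Subgroup.mem_zpowers _⟩,
    ⟨⟨ofAdd ∘ u, 1⟩, hu, Subgroup.one_mem _⟩, fun h => ?_⟩
  -- in coordinate `1` the two products carry `1` and `-1`
  have := congrArg (fun g : Hgrp p (m + 2) => toAdd ((g : Wreath p (m + 2)).left 1)) h
  simp [u] at this
  exact ZMod.neg_one_ne_one this.symm

theorem stmt17 (p : ℕ) (hp : p.Prime) (hop : Odd p) :
    minDeg ↥(Gppq p p) = p ^ 2 ∧ minDeg ↥(Hgrp p p) = p ^ 2 := by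
  have : Fact p.Prime := ⟨hp⟩
  have hp2 : 2 < p := hp.two_le.lt_of_ne fun h => by subst h; exact absurd hop (by decide)
  have hH : p ^ 2 ≤ minDeg (Hgrp p p) :=
    le_minDeg ⟨_, Wreath.exists_injective_perm _⟩ fun n f hf => Nat.card_fin n ▸
      (isPGroup_Hgrp p).sq_le_card_of_injective (exists_mul_ne_mul_Hgrp hp2 hp2.le) f hf
  have hT : ∀ T, Hgrp p p ≤ T → minDeg T = p ^ 2 := by
    intro T hHT
    obtain ⟨f, hf⟩ := Wreath.exists_injective_perm T
    refine le_antisymm (sq p ▸ minDeg_le f hf) (hH.trans ?_)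
    exact minDeg_le_minDeg_of_injective _ (Subgroup.inclusion_injective hHT) ⟨_, f, hf⟩
  exact ⟨hT _ (Hgrp_le_Gppq p p), hT _ le_rfl⟩
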